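/- arXiv:1602.04726 — 4 statements merged into one kernel-verified Lean document; each statement's English description precedes it below -/
import Mathlib

section
/- Let K ⊆ ℝ^d be an open convex set containing 0, let f : K → ℝ^m be C¹, and suppose ‖Df(0) − Df(x)‖ < r for all x ∈ K (operator norm). Let T be a linear operator on ℝ^d such that ‖Df(0)(T x)‖ ≥ β‖T x‖ for all x ∈ ℝ^d, and write T^⊥ = I − T. Then for all x, y ∈ K: ‖f(y) − f(x)‖ ≥ β·‖T y − T x‖ − ‖Df(0)‖·‖T^⊥ y − T^⊥ x‖ − r·‖y − x‖. -/
/-- Lemma 4.1: if `K ⊆ ℝ^d` is open convex containing `0`, `f : K → ℝ^m` is `C¹` with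
`‖Df(0) − Df(x)‖ < r` on `K`, and `T` is a linear operator with `‖Df(0)(Tx)‖ ≥ β‖Tx‖` for
all `x`, then for all `x, y ∈ K`,
`‖f(y) − f(x)‖ ≥ β‖Ty − Tx‖ − ‖Df(0)‖·‖T^⊥y − T^⊥x‖ − r‖y − x‖` where `T^⊥ = I − T`. -/
theorem stmt7 (d m : ℕ) (K : Set (EuclideanSpace ℝ (Fin d)))
    (hK : IsOpen K) (hconv : Convex ℝ K) (h0 : (0 : EuclideanSpace ℝ (Fin d)) ∈ K)
    (f : EuclideanSpace ℝ (Fin d) → EuclideanSpace ℝ (Fin m))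
    (f' : EuclideanSpace ℝ (Fin d) → (EuclideanSpace ℝ (Fin d) →L[ℝ] EuclideanSpace ℝ (Fin m)))
    (hf : ∀ x ∈ K, HasFDerivAt f (f' x) x) (hf' : ContinuousOn f' K)
    (r β : ℝ) (hr : ∀ x ∈ K, ‖f' 0 - f' x‖ < r)
    (T : EuclideanSpace ℝ (Fin d) →L[ℝ] EuclideanSpace ℝ (Fin d))
    (hT : ∀ x, β * ‖T x‖ ≤ ‖f' 0 (T x)‖)
    (x y : EuclideanSpace ℝ (Fin d)) (hx : x ∈ K) (hy : y ∈ K) :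
    β * ‖T y - T x‖ - ‖f' 0‖ * ‖(y - T y) - (x - T x)‖ - r * ‖y - x‖ ≤ ‖f y - f x‖ := by
  -- mean value inequality for g z = f z - f' 0 z
  have hmvt : ‖(f y - f' 0 y) - (f x - f' 0 x)‖ ≤ r * ‖y - x‖ := by
    apply hconv.norm_image_sub_le_of_norm_hasFDerivWithin_le
      (f' := fun z => f' z - f' 0) _ _ hx hy
    · intro z hz
      exact ((hf z hz).sub (f' 0).hasFDerivAt).hasFDerivWithinAt
    · intro z hz
      have := (hr z hz).le
      rwa [norm_sub_rev] at this
  have hsplit : f' 0 (y - x) = f' 0 (T y - T x) + f' 0 ((y - T y) - (x - T x)) := by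
    rw [← map_add]
    congr 1
    abel
  have h1 : ‖f' 0 (T y - T x)‖ - ‖f' 0 ((y - T y) - (x - T x))‖ ≤ ‖f' 0 (y - x)‖ := by
    rw [hsplit]
    have h2 : f' 0 (T y - T x)
        = (f' 0 (T y - T x) + f' 0 ((y - T y) - (x - T x))) - f' 0 ((y - T y) - (x - T x)) := by
      abel
    have h3 := norm_sub_le (f' 0 (T y - T x) + f' 0 ((y - T y) - (x - T x)))
      (f' 0 ((y - T y) - (x - T x)))
    rw [← h2] at h3
    linarith
  have hβ : β * ‖T y - T x‖ ≤ ‖f' 0 (T y - T x)‖ := by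
    have := hT (y - x)
    rwa [map_sub] at this
  have hop : ‖f' 0 ((y - T y) - (x - T x))‖ ≤ ‖f' 0‖ * ‖(y - T y) - (x - T x)‖ :=
    (f' 0).le_opNorm _
  have hlow : ‖f' 0 (y - x)‖ - r * ‖y - x‖ ≤ ‖f y - f x‖ := by
    have h4 : f y - f x = ((f y - f' 0 y) - (f x - f' 0 x)) + f' 0 (y - x) := by
      rw [map_sub]; abel
    have h6 : f' 0 (y - x) = (f y - f x) - ((f y - f' 0 y) - (f x - f' 0 x)) := by
      rw [map_sub]; abel
    have h5 := norm_sub_le (f y - f x) ((f y - f' 0 y) - (f x - f' 0 x))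
    rw [← h6] at h5
    linarith
  linarith
end

section
/- Let μ be a Borel probability measure on ℂ with the property that for every λ ∈ ℂ there exists ε > 0 with Σ_{k=0}^∞ μ(B(λ, ε^k)) < ∞. Let p(λ) = ∏_{j=1}^d (λ − λ_j) be a nonzero monic polynomial with roots λ_1,…,λ_d. Then the pushforward measure ν = |p|_* μ on [0,∞) (the distribution of λ ↦ |p(λ)| under μ) has geometric decay: there exists ε₀ ∈ (0,1) such that Σ_{k=1}^∞ ν((0, ε₀^k)) < ∞. -/
/-!
If `|p(z)| < δ^d` with `p(z) = ∏_j (z - λ_j)`, some factor satisfies `|z - λ_j| < δ`. Shrinking the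
radii of the hypothesis to a common ratio `δ < 1` (smaller ratios only shrink the balls), the set
`{|p| < ε₀^(k+1)}` with `ε₀ = δ^(d+1)` lies in `⋃_j B(λ_j, δ^k)`, so the tail sums of the
pushforward are bounded by `∑_j ∑_k μ(B(λ_j, δ^k)) < ∞`.
-/

open MeasureTheory Metric Set
open scoped ENNReal

section BallSums

variable {X : Type*} [PseudoMetricSpace X] [MeasurableSpace X] {μ : Measure X}

lemma tsum_measure_ball_pow_ne_top_of_le {x : X} {δ ε : ℝ} (hδ : 0 ≤ δ) (hδε : δ ≤ ε)
    (h : ∑' k : ℕ, μ (ball x (ε ^ k)) ≠ ∞) : ∑' k : ℕ, μ (ball x (δ ^ k)) ≠ ∞ :=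
  ne_top_of_le_ne_top h <| ENNReal.tsum_le_tsum fun k =>
    measure_mono <| ball_subset_ball <| pow_le_pow_left₀ hδ hδε k

lemma exists_common_ratio_tsum_measure_ball_pow_ne_top {ι : Type*} [Finite ι] (x : ι → X)
    (h : ∀ i, ∃ ε : ℝ, 0 < ε ∧ ∑' k : ℕ, μ (ball (x i) (ε ^ k)) ≠ ∞) :
    ∃ δ ∈ Ioo (0 : ℝ) 1, ∀ i, ∑' k : ℕ, μ (ball (x i) (δ ^ k)) ≠ ∞ := by
  choose ε hε_pos hε using h
  have : Nonempty (Ioo (0 : ℝ) 1) := ⟨⟨1 / 2, by norm_num⟩⟩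
  obtain ⟨⟨δ, hδ⟩, hδε⟩ := Finite.exists_ge (α := Ioo (0 : ℝ) 1)
    fun i => ⟨min (ε i) (1 / 2), lt_min (hε_pos i) one_half_pos, by norm_num⟩
  exact ⟨δ, hδ, fun i => tsum_measure_ball_pow_ne_top_of_le hδ.1.le
    ((Subtype.mk_le_mk.mp (hδε i)).trans (min_le_left _ _)) (hε i)⟩

end BallSums

lemma setOf_norm_prod_sub_lt_pow_card_subset {R ι : Type*} [SeminormedCommRing R] [NormMulClass R]
    [NormOneClass R] [Fintype ι] (r : ι → R) {δ : ℝ} (hδ : 0 ≤ δ) :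
    {z | ‖∏ i, (z - r i)‖ < δ ^ Fintype.card ι} ⊆ ⋃ i, ball (r i) δ := by
  intro z (hz : ‖∏ i, (z - r i)‖ < δ ^ Fintype.card ι)
  by_contra hz_far
  simp only [mem_iUnion, mem_ball, not_exists, not_lt, dist_eq_norm] at hz_far
  refine hz.not_ge ?_
  calc δ ^ Fintype.card ι = ∏ _i : ι, δ := by rw [Finset.prod_const, Finset.card_univ]
    _ ≤ ∏ i, ‖z - r i‖ := Finset.prod_le_prod (fun _ _ => hδ) fun i _ => hz_far i
    _ = ‖∏ i, (z - r i)‖ := (norm_prod _ _).symm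

theorem stmt14_general (μ : Measure ℂ)
    (hloc : ∀ lam : ℂ, ∃ ε : ℝ, 0 < ε ∧ ∑' k : ℕ, μ (Metric.ball lam (ε ^ k)) ≠ ⊤)
    (d : ℕ) (roots : Fin d → ℂ) :
    ∃ ε₀ ∈ Set.Ioo (0 : ℝ) 1,
      ∑' k : ℕ,
        (Measure.map (fun z : ℂ => ‖∏ j, (z - roots j)‖) μ)
          (Set.Ioo 0 (ε₀ ^ (k + 1))) ≠ ⊤ := by
  obtain ⟨δ, ⟨hδ_pos, hδ_lt_one⟩, hδ⟩ :=
    exists_common_ratio_tsum_measure_ball_pow_ne_top roots fun j => hloc (roots j)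
  have hp : Measurable fun z : ℂ => ‖∏ j, (z - roots j)‖ := by fun_prop
  -- The extra factor `δ` keeps `ε₀ < 1` when `d = 0`, and `d * k ≤ (d + 1) * (k + 1)`.
  refine ⟨δ ^ (d + 1), ⟨by positivity, pow_lt_one₀ hδ_pos.le hδ_lt_one d.succ_ne_zero⟩, ?_⟩
  have hterm (k : ℕ) : Measure.map (fun z : ℂ => ‖∏ j, (z - roots j)‖) μ
      (Ioo 0 ((δ ^ (d + 1)) ^ (k + 1))) ≤ ∑ j, μ (ball (roots j) (δ ^ k)) := by
    have hexp : (δ ^ (d + 1)) ^ (k + 1) ≤ (δ ^ k) ^ Fintype.card (Fin d) := by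
      rw [Fintype.card_fin, ← pow_mul, ← pow_mul]
      exact pow_le_pow_of_le_one hδ_pos.le hδ_lt_one.le (by nlinarith)
    rw [Measure.map_apply hp measurableSet_Ioo]
    calc _ ≤ μ (⋃ j, ball (roots j) (δ ^ k)) := measure_mono fun z hz =>
          setOf_norm_prod_sub_lt_pow_card_subset roots (by positivity) (hz.2.trans_le hexp)
      _ ≤ _ := measure_iUnion_fintype_le _ _
  refine ne_top_of_le_ne_top ?_ (ENNReal.tsum_le_tsum hterm)
  rw [Summable.tsum_finsetSum fun j _ => ENNReal.summable]
  exact ENNReal.sum_ne_top.mpr fun j _ => hδ j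

/-- Remark 6.6: if `μ` is a Borel probability measure on `ℂ` such that around every point
`λ` there is `ε > 0` with `Σ_k μ(B(λ, ε^k)) < ∞`, and `p(λ) = ∏_j (λ − λ_j)` is a nonzero
monic polynomial, then the pushforward of `μ` under `λ ↦ |p(λ)|` has geometric decay. -/
theorem stmt14 (μ : Measure ℂ) [IsProbabilityMeasure μ]
    (hloc : ∀ lam : ℂ, ∃ ε : ℝ, 0 < ε ∧ ∑' k : ℕ, μ (Metric.ball lam (ε ^ k)) ≠ ⊤)
    (d : ℕ) (hd : 0 < d) (roots : Fin d → ℂ) :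
    ∃ ε₀ ∈ Set.Ioo (0 : ℝ) 1,
      ∑' k : ℕ,
        (Measure.map (fun z : ℂ => ‖∏ j, (z - roots j)‖) μ)
          (Set.Ioo 0 (ε₀ ^ (k + 1))) ≠ ⊤ :=
  stmt14_general μ hloc d roots
end

section
/- Let (M,φ) be a tracial von Neumann algebra and T = [T_1 ⋯ T_n] a 1×n matrix with entries in M, regarded as an operator with absolute value |T| = (T*T)^{1/2} ∈ M_n(M). If some entry T_i is injective (as an operator on L²(M)), then the nullity of T equals n − 1, i.e. n·ψ(1_{{0}}(T*T)) = n − 1, where ψ is the normalized trace on M_n(M). -/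
open Matrix
open scoped ComplexOrder

/-- Lemma 6.13 in the matrix model `M = M_k(ℂ)`: a row `T = [T_1 ⋯ T_n]` with entries in
`M` is represented by the complex matrix `A : M_{k × nk}(ℂ)` with `A (r) (j, c) = T j r c`,
so that `T*T = AᴴA ∈ M_n(M)`.  If some entry `T i` is injective, then
`Nullity(T) = n − 1`, i.e. the kernel of `AᴴA` has dimension `(n−1)·k`:
the number of zero eigenvalues of `AᴴA` is `(n−1)·k`. -/
theorem stmt15 (n k : ℕ) (hn : 0 < n) (hk : 0 < k)
    (T : Fin n → Matrix (Fin k) (Fin k) ℂ)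
    (i : Fin n) (hi : Function.Injective (T i).mulVec) :
    (Finset.univ.filter fun j : Fin n × Fin k =>
      (Matrix.posSemidef_conjTranspose_mul_self
        (Matrix.of fun (r : Fin k) (c : Fin n × Fin k) =>
          T c.1 r c.2)).isHermitian.eigenvalues j = 0).card = (n - 1) * k := by
  set A : Matrix (Fin k) (Fin n × Fin k) ℂ :=
    Matrix.of fun (r : Fin k) (c : Fin n × Fin k) => T c.1 r c.2 with hA
  have hHerm := (Matrix.posSemidef_conjTranspose_mul_self A).isHermitian
  -- rank A = k
  have hTi : (T i).rank = k := by
    rw [Matrix.rank_of_isUnit _ (Matrix.mulVec_injective_iff_isUnit.mp hi), Fintype.card_fin]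
  have hAE : A * (Matrix.of fun (c : Fin n × Fin k) (c' : Fin k) =>
      if c = (i, c') then (1 : ℂ) else 0) = T i := by
    ext r c'
    simp only [Matrix.mul_apply, Matrix.of_apply, hA, mul_ite, mul_one, mul_zero]
    rw [Finset.sum_eq_single (i, c')] <;> simp +contextual
  have hrank_ge : k ≤ A.rank := by
    calc k = (T i).rank := hTi.symm
    _ ≤ A.rank := by rw [← hAE]; exact Matrix.rank_mul_le_left _ _
  have hrank : A.rank = k := le_antisymm (by simpa using A.rank_le_card_height) hrank_ge
  have hcard : Fintype.card {j : Fin n × Fin k // hHerm.eigenvalues j ≠ 0} = k := by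
    rw [← hHerm.rank_eq_card_non_zero_eigs, Matrix.rank_conjTranspose_mul_self, hrank]
  rw [Fintype.card_subtype] at hcard
  have htotal := Finset.card_filter_add_card_filter_not
    (s := (Finset.univ : Finset (Fin n × Fin k)))
    (p := fun j => hHerm.eigenvalues j = 0)
  simp only [Finset.card_univ, Fintype.card_prod, Fintype.card_fin] at htotal
  have : (Finset.univ.filter fun j => ¬ hHerm.eigenvalues j = 0).card = k := hcard
  have hkle : k ≤ n * k := Nat.le_mul_of_pos_left k hn
  have : (Finset.univ.filter fun j => hHerm.eigenvalues j = 0).card = (n - 1) * k := by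
    rw [Nat.sub_mul, one_mul]; omega
  exact this
end

section
/- For every n ∈ ℕ with n ≥ 1, let v_n = π^{n/2}/Γ(n/2 + 1) be the volume of the Euclidean unit ball in ℝ^n. Then, with c_k = (2π)^{−k}·(∏_{j=1}^k 2j·v_{2j})², one has lim_{k→∞} k^{−2}·log( v_{2k²}·k^{k²} / c_k ) = −1/2. -/
/-!
Since `v_{2m} = π^m / m!`, the powers of `π` cancel and
`v_{2k²} k^{k²} / c_k = k^{k²} sf(k)² / (2^k (k!)² (k²)!)` with `sf(k) = ∏_{j ≤ k} j!`.
Writing `sf(k) = (k!)^{k+1} / ∏_{j ≤ k} j^j`, the logarithm becomes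
`k² log k + 2k log k! - k log 2 - 2 ∑_{j ≤ k} j log j - log (k²)!`.
Stirling gives `log n! = n log n - n + o(n)`, and comparison with `∫ x log x` gives
`∑_{j ≤ k} j log j = k²/2 log k - k²/4 + o(k²)`;
the `k² log k` terms cancel and `-k²/2` remains.
-/

open Real

/-- `ballVol n` is the volume `v_n = π^{n/2}/Γ(n/2 + 1)` of the Euclidean unit ball in `ℝ^n`. -/
noncomputable def ballVol (n : ℕ) : ℝ :=
  Real.pi ^ ((n : ℝ) / 2) / Real.Gamma ((n : ℝ) / 2 + 1)

/-- St. Raymond's constant `c_k = (2π)^{−k}·(∏_{j=1}^k 2j·v_{2j})²`. -/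
noncomputable def srConst (k : ℕ) : ℝ :=
  ((2 * Real.pi) ^ k)⁻¹ * (∏ j ∈ Finset.Icc 1 k, (2 * (j : ℝ) * ballVol (2 * j))) ^ 2

open Filter Finset Asymptotics
open scoped Nat

theorem Nat.superFactorial_pos (n : ℕ) : 0 < n.superFactorial := by
  rw [← Nat.prod_Icc_factorial]
  exact prod_pos fun j _ => j.factorial_pos

theorem Nat.superFactorial_mul_prod_pow_self (n : ℕ) :
    n.superFactorial * ∏ j ∈ Icc 1 n, j ^ j = n ! ^ (n + 1) := by
  induction n with
  | zero => rfl
  | succ n ih =>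
    rw [Nat.superFactorial_succ, prod_Icc_succ_top (by omega), Nat.factorial_succ, mul_pow]
    calc _ = (n + 1) ^ (n + 2) * n ! * (n.superFactorial * ∏ j ∈ Icc 1 n, j ^ j) := by ring
      _ = _ := by rw [ih]; ring

theorem Real.log_superFactorial (n : ℕ) :
    log n.superFactorial = (n + 1) * log n ! - ∑ j ∈ Icc 1 n, (j : ℝ) * log j := by
  have h := congrArg (fun m : ℕ => log (m : ℝ)) (Nat.superFactorial_mul_prod_pow_self n)
  simp only [Nat.cast_mul, Nat.cast_pow, Nat.cast_prod] at h
  rw [log_mul (by exact_mod_cast (Nat.superFactorial_pos n).ne')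
      (prod_ne_zero_iff.2 fun j _ => by exact_mod_cast (Nat.pow_self_pos).ne'),
    log_prod fun j _ => by exact_mod_cast (Nat.pow_self_pos).ne'] at h
  simp only [log_pow, Nat.cast_add, Nat.cast_one] at h
  linarith

theorem Finset.sum_Icc_id_mul_two (n : ℕ) : (∑ j ∈ Icc 1 n, j) * 2 = n * (n + 1) := by
  induction n with
  | zero => rfl
  | succ n ih => rw [sum_Icc_succ_top (by omega), add_mul, ih]; ring

theorem ballVol_two_mul (m : ℕ) : ballVol (2 * m) = π ^ m / m ! := by
  rw [ballVol, Nat.cast_mul, Nat.cast_two, mul_div_cancel_left₀ _ two_ne_zero,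
    rpow_natCast, Gamma_nat_eq_factorial]

theorem srConst_eq (k : ℕ) :
    srConst k = 2 ^ k * π ^ (k ^ 2) * (k ! : ℝ) ^ 2 / (k.superFactorial : ℝ) ^ 2 := by
  have hprod : ∏ j ∈ Icc 1 k, (2 * (j : ℝ) * ballVol (2 * j))
      = 2 ^ k * k ! * π ^ (∑ j ∈ Icc 1 k, j) / k.superFactorial := by
    simp_rw [ballVol_two_mul, mul_div_assoc']
    rw [prod_div_distrib, prod_mul_distrib, prod_mul_distrib, prod_const, Nat.card_Icc,
      prod_pow_eq_pow_sum, ← Nat.prod_Icc_factorial, ← prod_Ico_id_eq_factorial]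
    push_cast
    rfl
  have hexp : (∑ j ∈ Icc 1 k, j) * 2 = k ^ 2 + k := by rw [sum_Icc_id_mul_two]; ring
  have hsf : (k.superFactorial : ℝ) ≠ 0 := by exact_mod_cast (Nat.superFactorial_pos k).ne'
  rw [srConst, hprod, div_pow, mul_pow, mul_pow, ← pow_mul, hexp, pow_add]
  field_simp

theorem log_ballVol_mul_pow_div_srConst {k : ℕ} (hk : k ≠ 0) :
    log (ballVol (2 * k ^ 2) * (k : ℝ) ^ (k ^ 2) / srConst k)
      = k ^ 2 * log k + 2 * k * log k ! - k * log 2 - 2 * ∑ j ∈ Icc 1 k, (j : ℝ) * log j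
        - log (k ^ 2)! := by
  have hk' : (0 : ℝ) < k := by exact_mod_cast Nat.pos_of_ne_zero hk
  have hsf : (0 : ℝ) < k.superFactorial := by exact_mod_cast Nat.superFactorial_pos k
  have hquot : ballVol (2 * k ^ 2) * (k : ℝ) ^ (k ^ 2) / srConst k
      = k ^ (k ^ 2) * k.superFactorial ^ 2 / (2 ^ k * k ! ^ 2 * (k ^ 2)!) := by
    rw [srConst_eq, ballVol_two_mul]
    field_simp
  rw [hquot, log_div (by positivity) (by positivity), log_mul (by positivity) (by positivity),
    log_mul (by positivity) (by positivity), log_mul (by positivity) (by positivity),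
    log_pow, log_pow, log_pow, log_pow, log_superFactorial]
  push_cast
  ring

theorem integral_mul_log {a b : ℝ} (ha : 0 < a) (hb : 0 < b) :
    ∫ x in a..b, x * log x
      = (b ^ 2 / 2 * log b - b ^ 2 / 4) - (a ^ 2 / 2 * log a - a ^ 2 / 4) := by
  refine intervalIntegral.integral_eq_sub_of_hasDerivAt
    (f := fun x => x ^ 2 / 2 * log x - x ^ 2 / 4) (fun x hx => ?_)
    (continuous_mul_log.intervalIntegrable a b)
  have hx : x ≠ 0 := by
    rcases Set.mem_uIcc.mp hx with h | h <;> linarith [h.1]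
  refine ((((hasDerivAt_pow 2 x).div_const 2).mul (hasDerivAt_log hx)).sub
    ((hasDerivAt_pow 2 x).div_const 4)).congr_deriv ?_
  field_simp
  ring

theorem monotoneOn_mul_log : MonotoneOn (fun x : ℝ => x * log x) (Set.Ici 1) :=
  fun x hx y _ hxy => mul_le_mul hxy (log_le_log (by linarith [hx.out]) hxy)
    (log_nonneg hx) (by linarith [hx.out])

theorem sum_mul_log_bounds {k : ℕ} (hk : 1 ≤ k) :
    k ^ 2 / 2 * log k - k ^ 2 / 4 + 1 / 4 ≤ ∑ j ∈ Icc 1 k, (j : ℝ) * log j ∧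
      ∑ j ∈ Icc 1 k, (j : ℝ) * log j
        ≤ k ^ 2 / 2 * log k - k ^ 2 / 4 + 1 / 4 + k * log k := by
  have hmono : MonotoneOn (fun x : ℝ => x * log x) (Set.Icc (1 : ℕ) k) :=
    monotoneOn_mul_log.mono fun x hx => by simpa using hx.1
  have hint : ∫ x in (1 : ℕ)..(k : ℝ), x * log x = k ^ 2 / 2 * log k - k ^ 2 / 4 + 1 / 4 := by
    rw [integral_mul_log (by norm_num) (by positivity)]
    simp
  have hlow := hmono.integral_le_sum_Ico hk
  have hupp := hmono.sum_le_integral_Ico hk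
  rw [hint] at hlow hupp
  rw [← Ico_add_one_right_eq_Icc]
  constructor
  · rw [sum_eq_sum_Ico_succ_bot (by omega), ← sum_Ico_add']
    simpa using hlow
  · rw [sum_Ico_succ_top (by omega)]
    linarith

theorem isLittleO_natCast_sq : (fun k : ℕ => (k : ℝ)) =o[atTop] (fun k => (k : ℝ) ^ 2) := by
  have := (isLittleO_pow_pow_atTop_of_lt (𝕜 := ℝ) one_lt_two).comp_tendsto
    tendsto_natCast_atTop_atTop
  simp only [pow_one] at this
  exact this

theorem isLittleO_log_factorial :
    (fun n : ℕ => log n ! - (n * log n - n)) =o[atTop] (fun n => (n : ℝ)) := by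
  have hstirling : (fun n : ℕ => log (Stirling.stirlingSeq n)) =O[atTop] (fun _ => (1 : ℝ)) :=
    ((continuousAt_log (by positivity)).tendsto.comp
      Stirling.tendsto_stirlingSeq_sqrt_pi).isBigO_one ℝ
  have hone : (fun _ : ℕ => (1 : ℝ)) =o[atTop] (fun n => (n : ℝ)) :=
    (isLittleO_one_left_iff ℝ).2 (tendsto_norm_atTop_atTop.comp tendsto_natCast_atTop_atTop)
  have hlog : (fun n : ℕ => log n) =o[atTop] (fun n => (n : ℝ)) :=
    isLittleO_log_id_atTop.comp_tendsto tendsto_natCast_atTop_atTop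
  refine ((hstirling.trans_isLittleO hone).add ((hone.const_mul_left (log 2 / 2)).add
    (hlog.const_mul_left (1 / 2)))).congr' ?_ EventuallyEq.rfl
  filter_upwards [eventually_ne_atTop 0] with n hn
  have hn' : (n : ℝ) ≠ 0 := by exact_mod_cast hn
  rw [Stirling.log_stirlingSeq_formula, log_mul two_ne_zero hn', log_div hn' (exp_pos 1).ne',
    log_exp]
  ring

theorem isLittleO_sum_mul_log :
    (fun k : ℕ => ∑ j ∈ Icc 1 k, (j : ℝ) * log j - (k ^ 2 / 2 * log k - k ^ 2 / 4))
      =o[atTop] (fun k => (k : ℝ) ^ 2) := by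
  have hmul : (fun k : ℕ => (k : ℝ) * log k) =o[atTop] (fun k => (k : ℝ) ^ 2) := by
    simpa [sq] using (isBigO_refl (fun k : ℕ => (k : ℝ)) atTop).mul_isLittleO
      (isLittleO_log_id_atTop.comp_tendsto tendsto_natCast_atTop_atTop)
  have hone : (fun _ : ℕ => (1 : ℝ)) =o[atTop] (fun k => (k : ℝ) ^ 2) :=
    (isLittleO_one_left_iff ℝ).2 (tendsto_norm_atTop_atTop.comp
      ((tendsto_pow_atTop two_ne_zero).comp tendsto_natCast_atTop_atTop))
  refine (IsBigO.of_bound' ?_).trans_isLittleO (hmul.add hone)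
  filter_upwards [eventually_ge_atTop 1] with k hk
  obtain ⟨hlow, hupp⟩ := sum_mul_log_bounds hk
  have hklog : 0 ≤ (k : ℝ) * log k := mul_log_nonneg (by exact_mod_cast hk)
  rw [norm_of_nonneg (by linarith), norm_of_nonneg (by linarith)]
  linarith

theorem isLittleO_log_ballVol_mul_pow_div_srConst_add :
    (fun k : ℕ => log (ballVol (2 * k ^ 2) * (k : ℝ) ^ (k ^ 2) / srConst k) + k ^ 2 / 2)
      =o[atTop] (fun k => (k : ℝ) ^ 2) := by
  have hfac_mul : (fun k : ℕ => k * (log k ! - (k * log k - k))) =o[atTop]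
      (fun k => (k : ℝ) ^ 2) := by
    simpa [sq] using
      (isBigO_refl (fun k : ℕ => (k : ℝ)) atTop).mul_isLittleO isLittleO_log_factorial
  have hfac_sq : (fun k : ℕ => log (k ^ 2)! - (k ^ 2 * log ((k : ℝ) ^ 2) - k ^ 2))
      =o[atTop] (fun k => (k : ℝ) ^ 2) := by
    simpa [Function.comp_def] using
      isLittleO_log_factorial.comp_tendsto (tendsto_pow_atTop two_ne_zero)
  refine (((hfac_mul.const_mul_left 2).sub (isLittleO_sum_mul_log.const_mul_left 2)).sub
    hfac_sq |>.sub (isLittleO_natCast_sq.const_mul_left (log 2))).congr' ?_ EventuallyEq.rfl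
  filter_upwards [eventually_ne_atTop 0] with k hk
  rw [log_ballVol_mul_pow_div_srConst hk, log_pow]
  ring

/-- Lemma A.3: `lim_{k→∞} k⁻²·log( v_{2k²}·k^{k²} / c_k ) = −1/2`. -/
theorem stmt17 :
    Filter.Tendsto
      (fun k : ℕ => ((k : ℝ) ^ 2)⁻¹ *
        Real.log (ballVol (2 * k ^ 2) * (k : ℝ) ^ (k ^ 2) / srConst k))
      Filter.atTop (nhds (-1 / 2)) := by
  have hlim := isLittleO_log_ballVol_mul_pow_div_srConst_add.tendsto_div_nhds_zero.add_const
    (-1 / 2)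
  rw [zero_add] at hlim
  refine hlim.congr' ?_
  filter_upwards [eventually_ne_atTop 0] with k hk
  have hk' : (k : ℝ) ≠ 0 := by exact_mod_cast hk
  field_simp
  ring
end
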